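/- Let A be a 3×3 matrix over 𝔽 with all off-diagonal entries nonzero. Then for any 3×3 matrix B with B[1,2] = B[1,3] = 1, one has A ≡PME B if and only if: (1) B[i,i] = A[i,i] for i = 1,2,3; (2) B[2,1] = A[1,2]·A[2,1] and B[3,1] = A[1,3]·A[3,1]; (3) B[2,3] is a root of the quadratic polynomial a·z² − b·z + c, where a = A[1,3]·A[3,1], b = A[1,2]·A[2,3]·A[3,1] + A[1,3]·A[3,2]·A[2,1], and c = A[1,2]·A[2,1]·A[2,3]·A[3,2]; and (4) B[2,3] ≠ 0 and B[3,2] = A[2,3]·A[3,2] / B[2,3]. -/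
import Mathlib


namespace PMAP

open Matrix

variable {K : Type*}

/-- The submatrix of a square matrix `A` with rows indexed by `S` and columns indexed by `T`. -/
def subm {m : Type*} (A : Matrix m m K) (S T : Finset m) : Matrix S T K :=
  Matrix.of fun i j => A i.1 j.1

/-- The principal minor of `A` indexed by `S`. -/
noncomputable def pminor {m : Type*} [DecidableEq m] [CommRing K]
    (A : Matrix m m K) (S : Finset m) : K :=
  (subm A S S).det

/-- `A` and `B` are principal minor equivalent. -/
def PME {m : Type*} [DecidableEq m] [CommRing K] (A B : Matrix m m K) : Prop :=
  ∀ S : Finset m, S.Nonempty → pminor A S = pminor B S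

/-- `A` and `B` are principal minor equivalent up to order `k`. -/
def PMEupto {m : Type*} [DecidableEq m] [CommRing K] (k : ℕ) (A B : Matrix m m K) : Prop :=
  ∀ S : Finset m, S.Nonempty → S.card ≤ k → pminor A S = pminor B S

/-- `X` is a cut of the principal submatrix `A[I]`. -/
def IsCutOn {m : Type*} [DecidableEq m] [Field K] (A : Matrix m m K) (I X : Finset m) : Prop :=
  X ⊆ I ∧ 2 ≤ X.card ∧ X.card + 2 ≤ I.card ∧
    (subm A X (I \ X)).rank ≤ 1 ∧ (subm A (I \ X) X).rank ≤ 1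

/-- `X` is a cut of `A`. -/
def IsCut {m : Type*} [Fintype m] [DecidableEq m] [Field K] (A : Matrix m m K)
    (X : Finset m) : Prop :=
  IsCutOn A Finset.univ X

/-- Property `R`: all off-diagonal entries are nonzero, and every rank-one `2×2`
submatrix `A[{i,j},{k,ℓ}]` (with `i,j,k,ℓ` distinct) extends to a rank-one submatrix
`A[X, Xᶜ]` with `i,j ∈ X` and `k,ℓ ∈ Xᶜ`. -/
def PropR {m : Type*} [Fintype m] [DecidableEq m] [Field K] (A : Matrix m m K) : Prop :=
  (∀ i j : m, i ≠ j → A i j ≠ 0) ∧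
    ∀ i j k l : m, i ≠ j → i ≠ k → i ≠ l → j ≠ k → j ≠ l → k ≠ l →
      (subm A {i, j} {k, l}).rank = 1 →
      ∃ X : Finset m, i ∈ X ∧ j ∈ X ∧ k ∉ X ∧ l ∉ X ∧ (subm A X Xᶜ).rank = 1

/-- `A` is diagonally similar to `B`: `B = D⁻¹ A D` for an invertible diagonal matrix `D`. -/
def DiagSim {m : Type*} [Field K] (A B : Matrix m m K) : Prop :=
  ∃ D : m → K, (∀ i, D i ≠ 0) ∧ ∀ i j, B i j = (D i)⁻¹ * A i j * D j

/-- The set `D₁(A,B)` of indices `i` with `A[[n]∖{i}]` diagonally similar to `B[[n]∖{i}]`. -/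
def D1 {n : ℕ} [Field K] (A B : Matrix (Fin n) (Fin n) K) : Set (Fin n) :=
  {i | DiagSim (subm A {i}ᶜ {i}ᶜ) (subm B {i}ᶜ {i}ᶜ)}

/-- The set `D₂(A,B)` of indices `i` with `A[[n]∖{i}]` diagonally similar to `B[[n]∖{i}]ᵀ`. -/
def D2 {n : ℕ} [Field K] (A B : Matrix (Fin n) (Fin n) K) : Set (Fin n) :=
  {i | DiagSim (subm A {i}ᶜ {i}ᶜ) (subm B {i}ᶜ {i}ᶜ)ᵀ}

/-- The pair `{{i,j},{k,l}}` satisfies property `P` for `A`: there is a matrix `C`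
principal minor equivalent to `A[{i,j,k,l}]` in which `{i,j}` is a cut. -/
def PropP {n : ℕ} [Field K] (A : Matrix (Fin n) (Fin n) K) (i j k l : Fin n) : Prop :=
  ∃ C : Matrix (Fin n) (Fin n) K,
    (∀ S : Finset (Fin n), S.Nonempty → S ⊆ {i, j, k, l} → pminor C S = pminor A S) ∧
    IsCutOn C {i, j, k, l} {i, j}

/-- `A` is irreducible: it cannot be brought to block upper triangular form
by a simultaneous permutation of rows and columns. -/
def Irred {m : Type*} [Fintype m] [Zero K] (A : Matrix m m K) : Prop :=
  ∀ S : Finset m, S.Nonempty → S ≠ Finset.univ → ∃ i, i ∉ S ∧ ∃ j ∈ S, A i j ≠ 0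


lemma pminor_singleton {m : Type*} [DecidableEq m] [CommRing K] (A : Matrix m m K) (i : m) :
    pminor A {i} = A i i := by
  haveI : Unique ({i} : Finset m) :=
    ⟨⟨⟨i, Finset.mem_singleton_self i⟩⟩, fun x => Subtype.ext (Finset.mem_singleton.mp x.2)⟩
  rw [pminor, Matrix.det_unique]
  show A _ _ = A i i
  congr 1 <;> exact Finset.mem_singleton.mp (default : ({i} : Finset m)).2

lemma pminor_pair {m : Type*} [DecidableEq m] [CommRing K] (A : Matrix m m K) {i j : m}
    (h : i ≠ j) : pminor A {i, j} = A i i * A j j - A i j * A j i := by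
  have hi : i ∈ ({i, j} : Finset m) := by simp
  have hj : j ∈ ({i, j} : Finset m) := by simp
  let e : Fin 2 ≃ ({i, j} : Finset m) :=
    { toFun := ![⟨i, hi⟩, ⟨j, hj⟩]
      invFun := fun x => if x.1 = i then 0 else 1
      left_inv := by
        intro k
        fin_cases k
        · simp
        · simp [h.symm]
      right_inv := by
        rintro ⟨x, hx⟩
        rcases Finset.mem_insert.mp hx with rfl | hx'
        · simp
        · have := Finset.mem_singleton.mp hx'
          subst this
          simp [h.symm] }
  have key : pminor A {i, j} =
      ((A.submatrix (fun x : ({i, j} : Finset m) => x.1) fun x => x.1).submatrix e e).det :=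
    (Matrix.det_submatrix_equiv_self e _).symm
  have e0 : (e 0).1 = i := rfl
  have e1 : (e 1).1 = j := rfl
  rw [key, Matrix.submatrix_submatrix, Matrix.det_fin_two]
  simp only [Matrix.submatrix_apply, Function.comp_apply, e0, e1]

lemma pminor_univ {m : Type*} [Fintype m] [DecidableEq m] [CommRing K] (A : Matrix m m K) :
    pminor A Finset.univ = A.det := by
  let e : m ≃ (Finset.univ : Finset m) :=
    ⟨fun x => ⟨x, Finset.mem_univ x⟩, fun x => x.1, fun _ => rfl, fun _ => rfl⟩
  have key : pminor A Finset.univ =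
      ((A.submatrix (fun x : (Finset.univ : Finset m) => x.1) fun x => x.1).submatrix e e).det :=
    (Matrix.det_submatrix_equiv_self e _).symm
  rw [key, Matrix.submatrix_submatrix]
  show (A.submatrix id id).det = A.det
  rw [Matrix.submatrix_id_id]


/-- Characterization of the `3×3` matrices `B` with first row
off-diagonal entries equal to `1` that are principal minor equivalent to a given
`3×3` matrix `A` with nonzero off-diagonal entries. (Indices `1,2,3` of the paper
correspond to `0,1,2 : Fin 3`.) -/
theorem pme_three_by_three_iff {K : Type*} [Field K]
    (A B : Matrix (Fin 3) (Fin 3) K)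
    (hA : ∀ i j : Fin 3, i ≠ j → A i j ≠ 0)
    (hB01 : B 0 1 = 1) (hB02 : B 0 2 = 1) :
    PME A B ↔
      ((∀ i : Fin 3, B i i = A i i) ∧
       (B 1 0 = A 0 1 * A 1 0 ∧ B 2 0 = A 0 2 * A 2 0) ∧
       ((A 0 2 * A 2 0) * B 1 2 ^ 2 -
          (A 0 1 * A 1 2 * A 2 0 + A 0 2 * A 2 1 * A 1 0) * B 1 2 +
          A 0 1 * A 1 0 * A 1 2 * A 2 1 = 0) ∧
       (B 1 2 ≠ 0 ∧ B 2 1 = A 1 2 * A 2 1 / B 1 2)) := by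
  have h01 : (0 : Fin 3) ≠ 1 := by decide
  have h02 : (0 : Fin 3) ≠ 2 := by decide
  have h12 : (1 : Fin 3) ≠ 2 := by decide
  have key : PME A B ↔
      (pminor A {0} = pminor B {0} ∧ pminor A {1} = pminor B {1} ∧
       pminor A {2} = pminor B {2} ∧ pminor A {0, 1} = pminor B {0, 1} ∧
       pminor A {0, 2} = pminor B {0, 2} ∧ pminor A {1, 2} = pminor B {1, 2} ∧
       pminor A Finset.univ = pminor B Finset.univ) := by
    constructor
    · intro h
      exact ⟨h _ ⟨0, by decide⟩, h _ ⟨1, by decide⟩, h _ ⟨2, by decide⟩,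
        h _ ⟨0, by decide⟩, h _ ⟨0, by decide⟩, h _ ⟨1, by decide⟩, h _ ⟨0, by decide⟩⟩
    · rintro ⟨h1, h2, h3, h4, h5, h6, h7⟩ S hS
      have hc : S = {0} ∨ S = {1} ∨ S = {2} ∨ S = {0, 1} ∨ S = {0, 2} ∨ S = {1, 2} ∨
          S = Finset.univ := by
        revert hS; revert S; decide
      rcases hc with rfl | rfl | rfl | rfl | rfl | rfl | rfl <;> assumption
  rw [key]
  simp only [pminor_singleton, pminor_pair A h01, pminor_pair B h01, pminor_pair A h02,
    pminor_pair B h02, pminor_pair A h12, pminor_pair B h12, pminor_univ,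
    Matrix.det_fin_three, hB01, hB02]
  constructor
  · rintro ⟨e0, e1, e2, e01, e02, e12, edet⟩
    have h10 : B 1 0 = A 0 1 * A 1 0 := by linear_combination e01 - A 0 0 * e1 - B 1 1 * e0
    have h20 : B 2 0 = A 0 2 * A 2 0 := by linear_combination e02 - A 0 0 * e2 - B 2 2 * e0
    have hmul : B 2 1 * B 1 2 = A 1 2 * A 2 1 := by
      linear_combination e12 - A 2 2 * e1 - B 1 1 * e2
    have hb12 : B 1 2 ≠ 0 := by
      intro h
      apply mul_ne_zero (hA 1 2 h12) (hA 2 1 h12.symm)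
      linear_combination -hmul + B 2 1 * h
    have h21 : B 2 1 = A 1 2 * A 2 1 / B 1 2 := by
      rw [eq_div_iff hb12]; exact hmul
    refine ⟨fun i => by fin_cases i <;> [exact e0.symm; exact e1.symm; exact e2.symm],
      ⟨h10, h20⟩, ?_, hb12, h21⟩
    rw [← e0, ← e1, ← e2, h10, h20, h21] at edet
    field_simp at edet
    linear_combination -edet
  · rintro ⟨hd, ⟨h10, h20⟩, hq, hb12, h21⟩
    have e0 := (hd 0).symm
    have e1 := (hd 1).symm
    have e2 := (hd 2).symm
    refine ⟨e0, e1, e2, ?_, ?_, ?_, ?_⟩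
    · linear_combination h10 + A 1 1 * e0 + B 0 0 * e1
    · linear_combination h20 + A 2 2 * e0 + B 0 0 * e2
    · have hmul : B 2 1 * B 1 2 = A 1 2 * A 2 1 := by
        rw [h21]; field_simp
      linear_combination hmul + A 2 2 * e1 + B 1 1 * e2
    · rw [← e0, ← e1, ← e2, h10, h20, h21]
      field_simp
      linear_combination -hq

end PMAP
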